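/- (Scalar curvature from chain abundances.) Let n ≥ 2 be an integer, T > 0, and R, R₀₀ arbitrary real numbers. With α_k = -nk/(12(kn+2)((k+1)n+2)) and β_k = nk/(12((k+1)n+2)), define for k = 1,2,3: Q_k = T^{3n}·( 1 + (3/k)·α_k·R·T² + (3/k)·β_k·R₀₀·T² ) and K_k = ((k+1)n+2)·Q_k. Then K₁ - 2K₂ + K₃ = - ( n³ / ( 2(n+2)(2n+2)(3n+2) ) ) · R · T^{3n+2}; equivalently, R = - ( 2(n+2)(2n+2)(3n+2) / (n³·T^{3n+2}) ) · (K₁ - 2K₂ + K₃). -/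
import Mathlib


/-- `α_k = -nk/(12(kn+2)((k+1)n+2))`, the coefficient of the scalar curvature `R(0)` in the
curvature expansion of the expected number of k-chains in a small causal diamond. -/
noncomputable def alphaCoeff (n k : ℕ) : ℝ :=
  -((n : ℝ) * k) / (12 * ((k : ℝ) * n + 2) * (((k : ℝ) + 1) * n + 2))

/-- `β_k = nk/(12((k+1)n+2))`, the coefficient of `R₀₀(0)` in the curvature expansion of
the expected number of k-chains in a small causal diamond. -/
noncomputable def betaCoeff (n k : ℕ) : ℝ :=
  (n : ℝ) * k / (12 * (((k : ℝ) + 1) * n + 2))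

/-- The ρ-independent combination `Q_k = T^{3n}(1 + (3/k)α_k R T² + (3/k)β_k R₀₀ T²)`
of k-chain abundances, truncated at its leading curvature correction. -/
noncomputable def Qchain (n : ℕ) (T R R₀₀ : ℝ) (k : ℕ) : ℝ :=
  T ^ (3 * n) *
    (1 + (3 / (k : ℝ)) * alphaCoeff n k * R * T ^ 2 +
      (3 / (k : ℝ)) * betaCoeff n k * R₀₀ * T ^ 2)

/-- `K_k = ((k+1)n+2)·Q_k`. -/
noncomputable def Kchain (n : ℕ) (T R R₀₀ : ℝ) (k : ℕ) : ℝ :=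
  (((k : ℝ) + 1) * n + 2) * Qchain n T R R₀₀ k

/-- Scalar curvature from chain abundances:
`K₁ - 2K₂ + K₃ = -(n³/(2(n+2)(2n+2)(3n+2)))·R·T^{3n+2}`; equivalently
`R = -(2(n+2)(2n+2)(3n+2)/(n³ T^{3n+2}))·(K₁ - 2K₂ + K₃)`. -/
theorem stmt14 (n : ℕ) (hn : 2 ≤ n) (T R R₀₀ : ℝ) (hT : 0 < T) :
    Kchain n T R R₀₀ 1 - 2 * Kchain n T R R₀₀ 2 + Kchain n T R R₀₀ 3 =
      -((n : ℝ) ^ 3 / (2 * ((n : ℝ) + 2) * (2 * (n : ℝ) + 2) * (3 * (n : ℝ) + 2))) *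
        R * T ^ (3 * n + 2) ∧
    R = -(2 * ((n : ℝ) + 2) * (2 * (n : ℝ) + 2) * (3 * (n : ℝ) + 2) /
          ((n : ℝ) ^ 3 * T ^ (3 * n + 2))) *
        (Kchain n T R R₀₀ 1 - 2 * Kchain n T R R₀₀ 2 + Kchain n T R R₀₀ 3) := by
  have hn0 : (0:ℝ) < (n:ℝ) := by positivity
  have h1 : ((n:ℝ) + 2) ≠ 0 := by positivity
  have h2 : (2*(n:ℝ) + 2) ≠ 0 := by positivity
  have h3 : (3*(n:ℝ) + 2) ≠ 0 := by positivity
  have h4 : (4*(n:ℝ) + 2) ≠ 0 := by positivity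
  have hTn : (T:ℝ) ≠ 0 := ne_of_gt hT
  have key : Kchain n T R R₀₀ 1 - 2 * Kchain n T R R₀₀ 2 + Kchain n T R R₀₀ 3 =
      -((n : ℝ) ^ 3 / (2 * ((n : ℝ) + 2) * (2 * (n : ℝ) + 2) * (3 * (n : ℝ) + 2))) *
        R * T ^ (3 * n + 2) := by
    simp only [Kchain, Qchain, alphaCoeff, betaCoeff]
    push_cast
    rw [pow_add]
    field_simp
    ring
  refine ⟨key, ?_⟩
  rw [key]
  have hn3 : ((n:ℝ))^3 ≠ 0 := by positivity
  have hTp : (T:ℝ)^(3*n+2) ≠ 0 := pow_ne_zero _ hTn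
  field_simp
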